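/- Let $K \subset \mathbb{R}^N$ be measurable with finite diameter, $M \subset \mathbb{R}^N$ open with $\mathrm{dist}(M,K) > 0$, and suppose $\inf_{x \in M} \int_K J(x,y)\,dy > 0$ for a nonnegative symmetric kernel $J$ with the Lévy integrability condition. Then for every $f \in \mathcal{V}^J_\infty(M)$ and every $\kappa > 0$ there exists $a > 0$ such that $w := f + a\,\mathbf{1}_K$ satisfies $\mathcal{E}_J(w,\varphi) \le -\kappa\int_M \varphi(x)\,dx$ for all nonnegative $\varphi \in \mathcal{D}^J(M)$ with bounded support. -/

import Mathlib

/-!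
Write `χ = 1_K`. Since `dist(M, K) > 0`, every `φ ∈ 𝒟^J(M)` vanishes on `K`, so `χ φ = 0` and, by
the symmetry of `J`, `ℰ_J(χ, φ) = -∫∫ φ(x) χ(y) J(x,y) ≤ -θ ∫_M φ` with `θ = inf_M ∫_K J(x,·)`.
Taking `a θ = max C_f 0 + κ`, where `|ℰ_J(f, φ)| ≤ C_f ∫_M |φ|`, then gives
`ℰ_J(f + a χ, φ) ≤ -κ ∫_M φ`.

All integrals involved are finite: on `M × K` we have `min 1 dist² ≥ min 1 δ²`, so the Lévy
condition bounds `∫_K J(x,·)` uniformly on `M`; and `φ` is integrable because `θ ∫ φ²` is at most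
the energy of `φ` while its support has finite measure.
-/

open MeasureTheory Set

noncomputable section

variable {N : ℕ}

/-- The signed bilinear form `ℰ_J(v,w) = ½ ∫∫ (v(x)-v(y))(w(x)-w(y)) J(x,y) dx dy`. -/
def bilinForm (J : EuclideanSpace ℝ (Fin N) → EuclideanSpace ℝ (Fin N) → ℝ)
    (v w : EuclideanSpace ℝ (Fin N) → ℝ) : ℝ :=
  (1 / 2) * ∫ p : EuclideanSpace ℝ (Fin N) × EuclideanSpace ℝ (Fin N),
    (v p.1 - v p.2) * (w p.1 - w p.2) * J p.1 p.2

/-- `v ∈ 𝒟^J(M)`: measurable, vanishing outside `M`, with finite energy. -/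
def memDJ (J : EuclideanSpace ℝ (Fin N) → EuclideanSpace ℝ (Fin N) → ℝ)
    (M : Set (EuclideanSpace ℝ (Fin N))) (v : EuclideanSpace ℝ (Fin N) → ℝ) : Prop :=
  Measurable v ∧ (∀ x ∉ M, v x = 0) ∧
    Integrable (fun p : EuclideanSpace ℝ (Fin N) × EuclideanSpace ℝ (Fin N) =>
      (v p.1 - v p.2) ^ 2 * J p.1 p.2)

section Kernel

variable {α : Type*} [MeasurableSpace α] {μ : Measure α} {J : α → α → ℝ}

lemma setLIntegral_ofReal_le_div_of_le_dist [PseudoMetricSpace α] {x : α}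
    (hJ : ∀ y, 0 ≤ J x y) {CJ δ : ℝ} (hδ : 0 < δ)
    (hCJ : ∫⁻ y, ENNReal.ofReal (min 1 (dist x y ^ 2) * J x y) ∂μ ≤ ENNReal.ofReal CJ)
    {K : Set α} (hK : MeasurableSet K) (hKx : ∀ y ∈ K, δ ≤ dist x y) :
    ∫⁻ y in K, ENNReal.ofReal (J x y) ∂μ ≤ ENNReal.ofReal (CJ / min 1 (δ ^ 2)) := by
  set c := min 1 (δ ^ 2)
  have hc : 0 < c := by positivity
  calc ∫⁻ y in K, ENNReal.ofReal (J x y) ∂μ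
      ≤ ∫⁻ y in K, ENNReal.ofReal c⁻¹ * ENNReal.ofReal (min 1 (dist x y ^ 2) * J x y) ∂μ := by
        refine setLIntegral_mono' hK fun y hy => ?_
        rw [← ENNReal.ofReal_mul (by positivity)]
        refine ENNReal.ofReal_le_ofReal ((le_inv_mul_iff₀ hc).2 ?_)
        have hcy : c ≤ min 1 (dist x y ^ 2) :=
          min_le_min_left _ (pow_le_pow_left₀ hδ.le (hKx y hy) 2)
        exact mul_le_mul_of_nonneg_right hcy (hJ y)
    _ = ENNReal.ofReal c⁻¹ * ∫⁻ y in K, ENNReal.ofReal (min 1 (dist x y ^ 2) * J x y) ∂μ :=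
        lintegral_const_mul' _ _ ENNReal.ofReal_ne_top
    _ ≤ ENNReal.ofReal c⁻¹ * ENNReal.ofReal CJ := by
        gcongr
        exact (setLIntegral_le_lintegral _ _).trans hCJ
    _ = ENNReal.ofReal (CJ / c) := by
        rw [← ENNReal.ofReal_mul (by positivity), div_eq_inv_mul]

variable [SFinite μ] {φ : α → ℝ} {M K : Set α}

lemma mul_lintegral_sq_le_energy (hJ : Measurable fun p : α × α => J p.1 p.2)
    (hφ : Measurable φ) (hK : MeasurableSet K) (hφM : ∀ x ∉ M, φ x = 0) (hφK : ∀ y ∈ K, φ y = 0)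
    {θ : ENNReal} (hθ : ∀ x ∈ M, θ ≤ ∫⁻ y in K, ENNReal.ofReal (J x y) ∂μ) :
    θ * ∫⁻ x, ENNReal.ofReal (φ x ^ 2) ∂μ
      ≤ ∫⁻ p, ENNReal.ofReal ((φ p.1 - φ p.2) ^ 2 * J p.1 p.2) ∂μ.prod μ := by
  rw [lintegral_prod _ (by fun_prop)]
  refine (lintegral_const_mul_le _ _).trans (lintegral_mono fun x => ?_)
  by_cases hx : x ∈ M
  · calc θ * ENNReal.ofReal (φ x ^ 2)
        ≤ (∫⁻ y in K, ENNReal.ofReal (J x y) ∂μ) * ENNReal.ofReal (φ x ^ 2) := by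
          gcongr; exact hθ x hx
      _ ≤ ∫⁻ y in K, ENNReal.ofReal (J x y) * ENNReal.ofReal (φ x ^ 2) ∂μ :=
          lintegral_mul_const_le _ _
      _ ≤ ∫⁻ y in K, ENNReal.ofReal ((φ x - φ y) ^ 2 * J x y) ∂μ := by
          refine setLIntegral_mono' hK fun y hy => ?_
          rw [hφK y hy, sub_zero, mul_comm, ENNReal.ofReal_mul (sq_nonneg _)]
      _ ≤ _ := setLIntegral_le_lintegral _ _
  · simp [hφM x hx]

lemma integrable_mul_indicator_mul (hJpos : ∀ x y, 0 ≤ J x y)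
    (hJ : Measurable fun p : α × α => J p.1 p.2) (hφ : Measurable φ) (hφi : Integrable φ μ)
    (hK : MeasurableSet K) (hφM : ∀ x ∉ M, φ x = 0) {C : ENNReal} (hC : C ≠ ⊤)
    (hrow : ∀ x ∈ M, ∫⁻ y in K, ENNReal.ofReal (J x y) ∂μ ≤ C) :
    Integrable (fun p : α × α => φ p.1 * K.indicator 1 p.2 * J p.1 p.2) (μ.prod μ) := by
  have hF : Measurable fun p : α × α => φ p.1 * K.indicator 1 p.2 * J p.1 p.2 :=
    ((hφ.comp measurable_fst).mul ((measurable_const.indicator hK).comp measurable_snd)).mul hJ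
  refine ⟨hF.aestronglyMeasurable, ?_⟩
  rw [HasFiniteIntegral, lintegral_prod _ hF.enorm.aemeasurable]
  calc ∫⁻ x, ∫⁻ y, ‖φ x * K.indicator 1 y * J x y‖ₑ ∂μ ∂μ
      ≤ ∫⁻ x, C * ‖φ x‖ₑ ∂μ := lintegral_mono fun x => ?_
    _ = C * ∫⁻ x, ‖φ x‖ₑ ∂μ := lintegral_const_mul' _ _ hC
    _ < ⊤ := ENNReal.mul_lt_top hC.lt_top hφi.2
  by_cases hx : x ∈ M
  · have hpt : ∀ y, ‖φ x * K.indicator 1 y * J x y‖ₑ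
        = ‖φ x‖ₑ * K.indicator (fun y => ENNReal.ofReal (J x y)) y := by
      intro y
      by_cases hy : y ∈ K
      · simp [hy, Real.enorm_eq_ofReal (hJpos x y)]
      · simp [hy]
    simp_rw [hpt]
    rw [lintegral_const_mul' _ _ enorm_ne_top, lintegral_indicator hK, mul_comm]
    gcongr
    exact hrow x hx
  · simp [hφM x hx]

lemma mul_integral_le_integral_mul_indicator_mul (hφi : Integrable φ μ) (hφpos : ∀ x, 0 ≤ φ x)
    (hK : MeasurableSet K) (hφM : ∀ x ∉ M, φ x = 0)
    (hF : Integrable (fun p : α × α => φ p.1 * K.indicator 1 p.2 * J p.1 p.2) (μ.prod μ))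
    {θ : ℝ} (hθ : ∀ x ∈ M, θ ≤ ∫ y in K, J x y ∂μ) :
    θ * ∫ x, φ x ∂μ ≤ ∫ p, φ p.1 * K.indicator 1 p.2 * J p.1 p.2 ∂μ.prod μ := by
  have hinner : ∀ x, ∫ y, φ x * K.indicator 1 y * J x y ∂μ = φ x * ∫ y in K, J x y ∂μ := by
    intro x
    simp_rw [mul_assoc, integral_const_mul, ← integral_indicator hK]
    congr 1
    refine integral_congr_ae (ae_of_all _ fun y => ?_)
    by_cases hy : y ∈ K <;> simp [hy]
  rw [integral_prod _ hF, ← integral_const_mul]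
  refine integral_mono (hφi.const_mul θ) hF.integral_prod_left fun x => ?_
  rw [hinner]
  by_cases hx : x ∈ M
  · rw [mul_comm]
    exact mul_le_mul_of_nonneg_left (hθ x hx) (hφpos x)
  · simp [hφM x hx]

lemma IntegrableOn.univ_prod_of_swap_eq {g : α × α → ℝ} (hg : ∀ p, g p.swap = g p)
    (h : IntegrableOn g (M ×ˢ univ) (μ.prod μ)) : IntegrableOn g (univ ×ˢ M) (μ.prod μ) := by
  rw [IntegrableOn, ← Measure.prod_restrict] at h ⊢
  rw [Measure.restrict_univ] at h ⊢
  simpa [Function.comp_def, hg] using h.swap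

lemma integrable_diff_mul_diff_mul (hJpos : ∀ x y, 0 ≤ J x y) (hJsym : ∀ x y, J x y = J y x)
    (hJ : Measurable fun p : α × α => J p.1 p.2) {f : α → ℝ} (hf : Measurable f)
    (hφ : Measurable φ) (hφM : ∀ x ∉ M, φ x = 0)
    (hfE : IntegrableOn (fun p : α × α => (f p.1 - f p.2) ^ 2 * J p.1 p.2) (M ×ˢ univ) (μ.prod μ))
    (hφE : Integrable (fun p : α × α => (φ p.1 - φ p.2) ^ 2 * J p.1 p.2) (μ.prod μ)) :
    Integrable (fun p : α × α => (f p.1 - f p.2) * (φ p.1 - φ p.2) * J p.1 p.2) (μ.prod μ) := by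
  set S := M ×ˢ univ ∪ univ ×ˢ M
  have hfE' : IntegrableOn (fun p : α × α => (f p.1 - f p.2) ^ 2 * J p.1 p.2) S (μ.prod μ) :=
    hfE.union (IntegrableOn.univ_prod_of_swap_eq (fun p => by
      simp only [Prod.fst_swap, Prod.snd_swap, hJsym p.2 p.1]; ring) hfE)
  have hsupp : Function.support
      (fun p : α × α => (f p.1 - f p.2) * (φ p.1 - φ p.2) * J p.1 p.2) ⊆ S := by
    intro p hp
    by_contra hpS
    simp only [S, mem_union, mem_prod, mem_univ, and_true, true_and, not_or] at hpS
    exact hp (by simp [hφM _ hpS.1, hφM _ hpS.2])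
  rw [← integrableOn_iff_integrable_of_support_subset hsupp]
  refine Integrable.mono' (hfE'.add hφE.integrableOn)
    ((((hf.comp measurable_fst).sub (hf.comp measurable_snd)).mul
      ((hφ.comp measurable_fst).sub (hφ.comp measurable_snd))).mul hJ).aestronglyMeasurable
    (ae_of_all _ fun p => ?_)
  set u := f p.1 - f p.2
  set w := φ p.1 - φ p.2
  have hprod : |u| * |w| ≤ u ^ 2 + w ^ 2 := by
    nlinarith [two_mul_le_add_sq |u| |w|, sq_abs u, sq_abs w, abs_nonneg u, abs_nonneg w]
  rw [Real.norm_eq_abs, abs_mul, abs_mul, abs_of_nonneg (hJpos _ _), Pi.add_apply, ← add_mul]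
  exact mul_le_mul_of_nonneg_right hprod (hJpos _ _)

end Kernel

section Euclidean

variable {J : EuclideanSpace ℝ (Fin N) → EuclideanSpace ℝ (Fin N) → ℝ}

lemma memDJ.integrable (hJpos : ∀ x y, 0 ≤ J x y)
    (hJ : Measurable fun p : EuclideanSpace ℝ (Fin N) × EuclideanSpace ℝ (Fin N) => J p.1 p.2)
    {M K : Set (EuclideanSpace ℝ (Fin N))} (hK : MeasurableSet K) {θ : ENNReal} (hθ : θ ≠ 0)
    (hθK : ∀ x ∈ M, θ ≤ ∫⁻ y in K, ENNReal.ofReal (J x y))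
    {φ : EuclideanSpace ℝ (Fin N) → ℝ} (hφ : memDJ J M φ) (hφK : ∀ y ∈ K, φ y = 0)
    (hbd : Bornology.IsBounded (Function.support φ)) :
    Integrable φ := by
  obtain ⟨hφm, hφM, hφE⟩ := hφ
  have hsq : ∫⁻ x, ENNReal.ofReal (φ x ^ 2) < ⊤ := by
    refine ENNReal.lt_top_of_mul_ne_top_right ?_ hθ
    refine ((mul_lintegral_sq_le_energy hJ hφm hK hφM hφK hθK).trans_lt ?_).ne
    exact (hasFiniteIntegral_iff_ofReal (ae_of_all _ fun p =>
      mul_nonneg (sq_nonneg _) (hJpos _ _))).1 hφE.2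
  have hL2 : MemLp φ 2 := (memLp_two_iff_integrable_sq hφm.aestronglyMeasurable).2
    ⟨(hφm.pow_const 2).aestronglyMeasurable,
      (hasFiniteIntegral_iff_ofReal (ae_of_all _ fun x => sq_nonneg _)).2 hsq⟩
  exact memLp_one_iff_integrable.1 (hL2.mono_exponent_of_measure_support_ne_top
    (fun x hx => Function.notMem_support.1 hx) hbd.measure_lt_top.ne (by norm_num))

lemma bilinForm_add_mul_eq_sub (hJsym : ∀ x y, J x y = J y x)
    {f v φ : EuclideanSpace ℝ (Fin N) → ℝ} (hvφ : ∀ x, v x * φ x = 0)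
    (hG : Integrable fun p : EuclideanSpace ℝ (Fin N) × EuclideanSpace ℝ (Fin N) =>
      (f p.1 - f p.2) * (φ p.1 - φ p.2) * J p.1 p.2)
    (hF : Integrable fun p : EuclideanSpace ℝ (Fin N) × EuclideanSpace ℝ (Fin N) =>
      φ p.1 * v p.2 * J p.1 p.2)
    (a : ℝ) :
    bilinForm J (fun x => f x + a * v x) φ
      = bilinForm J f φ - a * ∫ p : EuclideanSpace ℝ (Fin N) × EuclideanSpace ℝ (Fin N),
          φ p.1 * v p.2 * J p.1 p.2 := by
  set F := fun p : EuclideanSpace ℝ (Fin N) × EuclideanSpace ℝ (Fin N) =>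
    φ p.1 * v p.2 * J p.1 p.2
  have hpt : ∀ p : EuclideanSpace ℝ (Fin N) × EuclideanSpace ℝ (Fin N),
      (f p.1 + a * v p.1 - (f p.2 + a * v p.2)) * (φ p.1 - φ p.2) * J p.1 p.2
        = (f p.1 - f p.2) * (φ p.1 - φ p.2) * J p.1 p.2 - a * (F p.swap + F p) := by
    intro p
    simp only [F, Prod.fst_swap, Prod.snd_swap, hJsym p.2 p.1]
    linear_combination (a * J p.1 p.2) * (hvφ p.1 + hvφ p.2)
  have hswap : ∫ p : EuclideanSpace ℝ (Fin N) × EuclideanSpace ℝ (Fin N), F p.swap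
      = ∫ p, F p := by
    rw [Measure.volume_eq_prod]
    exact integral_prod_swap F
  have hFswap : Integrable fun p : EuclideanSpace ℝ (Fin N) × EuclideanSpace ℝ (Fin N) =>
      F p.swap := by
    rw [Measure.volume_eq_prod] at hF ⊢
    exact hF.swap
  have hH : Integrable fun p : EuclideanSpace ℝ (Fin N) × EuclideanSpace ℝ (Fin N) =>
      a * (F p.swap + F p) := (hFswap.add hF).const_mul a
  unfold bilinForm
  simp_rw [hpt]
  rw [integral_sub hG hH, integral_const_mul, integral_add hFswap hF, hswap]
  ring

end Euclidean

theorem subsolution_property_general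
    (J : EuclideanSpace ℝ (Fin N) → EuclideanSpace ℝ (Fin N) → ℝ)
    (hJpos : ∀ x y, 0 ≤ J x y) (hJsym : ∀ x y, J x y = J y x)
    (hJmeas : Measurable fun p : EuclideanSpace ℝ (Fin N) × EuclideanSpace ℝ (Fin N) => J p.1 p.2)
    -- Lévy integrability condition (J1):
    (CJ : ℝ)
    (hCJ : ∀ x, (∫⁻ y, ENNReal.ofReal (min 1 (dist x y ^ 2) * J x y)) ≤ ENNReal.ofReal CJ)
    (K : Set (EuclideanSpace ℝ (Fin N))) (hKmeas : MeasurableSet K)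
    (M : Set (EuclideanSpace ℝ (Fin N)))
    -- `dist(M,K) > 0`:
    (hdist : ∃ δ > 0, ∀ x ∈ M, ∀ y ∈ K, δ ≤ dist x y)
    -- `inf_{x ∈ M} ∫_K J(x,y) dy > 0`:
    (hinf : ∃ θ > 0, ∀ x ∈ M, θ ≤ ∫ y in K, J x y)
    -- `f ∈ 𝒱^J_∞(M)`:
    (f : EuclideanSpace ℝ (Fin N) → ℝ) (hf : Measurable f)
    (hfρ : IntegrableOn
      (fun p : EuclideanSpace ℝ (Fin N) × EuclideanSpace ℝ (Fin N) =>
        (f p.1 - f p.2) ^ 2 * J p.1 p.2) (M ×ˢ univ))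
    (Cf : ℝ)
    (hCf : ∀ φ, memDJ J M φ → Integrable φ →
      |bilinForm J f φ| ≤ Cf * ∫ x in M, |φ x|)
    (κ : ℝ) (hκ : 0 < κ) :
    ∃ a > 0, ∀ φ, memDJ J M φ → (∀ x, 0 ≤ φ x) →
      Bornology.IsBounded (Function.support φ) →
      bilinForm J (fun x => f x + a * K.indicator (fun _ => (1 : ℝ)) x) φ
        ≤ -κ * ∫ x in M, φ x := by
  obtain ⟨δ, hδ, hdist⟩ := hdist
  obtain ⟨θ, hθ, hinf⟩ := hinf
  have hMK : ∀ x ∈ M, x ∉ K := fun x hx hxK => by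
    simpa using hδ.trans_le (hdist x hx x hxK)
  have hrow : ∀ x ∈ M, ∫⁻ y in K, ENNReal.ofReal (J x y) ≤ ENNReal.ofReal (CJ / min 1 (δ ^ 2)) :=
    fun x hx => setLIntegral_ofReal_le_div_of_le_dist (hJpos x) hδ (hCJ x) hKmeas (hdist x hx)
  have hθK : ∀ x ∈ M, ENNReal.ofReal θ ≤ ∫⁻ y in K, ENNReal.ofReal (J x y) := fun x hx =>
    ENNReal.ofReal_le_of_le_toReal <| by
      rw [← integral_eq_lintegral_of_nonneg_ae (ae_of_all _ (hJpos x))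
        (hJmeas.comp measurable_prodMk_left).aestronglyMeasurable]
      exact hinf x hx
  set a := (max Cf 0 + κ) / θ
  have ha : 0 < a := by positivity
  refine ⟨a, ha, fun φ hφ hφpos hφbd => ?_⟩
  have ⟨hφm, hφM, hφE⟩ := hφ
  have hφK : ∀ y ∈ K, φ y = 0 := fun y hy => hφM y fun hyM => hMK y hyM hy
  have hφi : Integrable φ :=
    hφ.integrable hJpos hJmeas hKmeas (ENNReal.ofReal_pos.2 hθ).ne' hθK hφK hφbd
  have hF :=
    integrable_mul_indicator_mul hJpos hJmeas hφm hφi hKmeas hφM ENNReal.ofReal_ne_top hrow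
  have hG := integrable_diff_mul_diff_mul hJpos hJsym hJmeas hf hφm hφM hfρ hφE
  have hlow := mul_integral_le_integral_mul_indicator_mul hφi hφpos hKmeas hφM hF hinf
  have hvφ : ∀ x, K.indicator 1 x * φ x = 0 := fun x => by
    by_cases hx : x ∈ K <;> simp [hx, hφK]
  rw [bilinForm_add_mul_eq_sub (v := K.indicator fun _ => 1) hJsym hvφ hG hF]
  have hup : bilinForm J f φ ≤ max Cf 0 * ∫ x, φ x := by
    have h := hCf φ hφ hφi
    simp_rw [abs_of_nonneg (hφpos _), setIntegral_eq_integral_of_forall_compl_eq_zero hφM] at h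
    refine (le_abs_self _).trans (h.trans ?_)
    gcongr
    exacts [integral_nonneg hφpos, le_max_left _ _]
  rw [setIntegral_eq_integral_of_forall_compl_eq_zero hφM]
  have haθ : a * θ = max Cf 0 + κ := div_mul_cancel₀ _ hθ.ne'
  calc bilinForm J f φ - a * (∫ p, φ p.1 * K.indicator 1 p.2 * J p.1 p.2 ∂volume.prod volume)
      ≤ max Cf 0 * (∫ x, φ x) - a * (θ * ∫ x, φ x) := by gcongr
    _ = -κ * ∫ x, φ x := by rw [← mul_assoc, haθ]; ring

/-- Lemma (subsolution property): if `K` is bounded measurable, `M` open with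
`dist(M,K) > 0` and `inf_{x∈M} ∫_K J(x,y) dy > 0`, then for every `f ∈ 𝒱^J_∞(M)` and
`κ > 0` there is `a > 0` such that `w = f + a·1_K` satisfies
`ℰ_J(w,φ) ≤ -κ ∫_M φ` for every nonnegative `φ ∈ 𝒟^J(M)` with bounded support. -/
theorem subsolution_property
    (J : EuclideanSpace ℝ (Fin N) → EuclideanSpace ℝ (Fin N) → ℝ)
    (hJpos : ∀ x y, 0 ≤ J x y) (hJsym : ∀ x y, J x y = J y x)
    (hJmeas : Measurable fun p : EuclideanSpace ℝ (Fin N) × EuclideanSpace ℝ (Fin N) => J p.1 p.2)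
    -- Lévy integrability condition (J1):
    (CJ : ℝ)
    (hCJ : ∀ x, (∫⁻ y, ENNReal.ofReal (min 1 (dist x y ^ 2) * J x y)) ≤ ENNReal.ofReal CJ)
    (K : Set (EuclideanSpace ℝ (Fin N))) (hKmeas : MeasurableSet K)
    (hKbd : Bornology.IsBounded K)
    (M : Set (EuclideanSpace ℝ (Fin N))) (hM : IsOpen M)
    -- `dist(M,K) > 0`:
    (hdist : ∃ δ > 0, ∀ x ∈ M, ∀ y ∈ K, δ ≤ dist x y)
    -- `inf_{x ∈ M} ∫_K J(x,y) dy > 0`: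
    (hinf : ∃ θ > 0, ∀ x ∈ M, θ ≤ ∫ y in K, J x y)
    -- `f ∈ 𝒱^J_∞(M)`:
    (f : EuclideanSpace ℝ (Fin N) → ℝ) (hf : Measurable f)
    (hfρ : IntegrableOn
      (fun p : EuclideanSpace ℝ (Fin N) × EuclideanSpace ℝ (Fin N) =>
        (f p.1 - f p.2) ^ 2 * J p.1 p.2) (M ×ˢ univ))
    (Cf : ℝ)
    (hCf : ∀ φ, memDJ J M φ → Integrable φ →
      |bilinForm J f φ| ≤ Cf * ∫ x in M, |φ x|)
    (κ : ℝ) (hκ : 0 < κ) :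
    ∃ a > 0, ∀ φ, memDJ J M φ → (∀ x, 0 ≤ φ x) →
      Bornology.IsBounded (Function.support φ) →
      bilinForm J (fun x => f x + a * K.indicator (fun _ => (1 : ℝ)) x) φ
        ≤ -κ * ∫ x in M, φ x :=
  subsolution_property_general J hJpos hJsym hJmeas CJ hCJ K hKmeas M hdist hinf f hf hfρ Cf hCf κ
    hκ

end
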